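/- (Theorem 2(iii), basin converse) For every γ ∈ (1, 2] and every b > 0, every nonconstant periodic solution of the planar system lying in the half-plane x > 0 is entirely contained in the set B = {(x, y) ∈ ℝ² : y² + x² - (2b/3)·x³ < 0 and x > 0}. Precisely: if x, y : ℝ → ℝ are differentiable functions satisfying x'(t) = -x(t)·y(t) and y'(t) = b(γ-1)·x(t)³ - ((3γ-2)/2)·x(t)² - (3γ/2)·y(t)² for all t, with x(t) > 0 for all t, (x, y) nonconstant, and x(t+T) = x(t), y(t+T) = y(t) for all t for some T > 0, then y(t)² + x(t)² - (2b/3)·x(t)³ < 0 for all t. -/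

import Mathlib

/-!
Along solutions, `V = y² + x² - (2b/3) x³` (`basinFunction`) satisfies `V' = -3γ y V`, so `V`
never changes sign along an orbit. A periodic `x` attains its maximum at some `t₀`; there `ẋ = -x y = 0` forces
`y(t₀) = 0`, and maximality forces `ẏ(t₀) ≥ 0`, i.e. `b (γ - 1) x(t₀) ≥ (3γ - 2)/2`. For `γ > 1`
this gives `(2b/3) x(t₀) > 1`, that is `V(t₀) < 0`.
-/

open Set Filter Topology

theorem Function.Periodic.exists_forall_le_of_continuous {α : Type*} [LinearOrder α]
    [TopologicalSpace α] [ClosedIciTopology α] {f : ℝ → α} {c : ℝ}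
    (hp : Function.Periodic f c) (hc : c ≠ 0) (hf : Continuous f) :
    ∃ t₀, ∀ t, f t ≤ f t₀ := by
  obtain ⟨_, ⟨t₀, rfl⟩, hub⟩ :=
    (hp.compact_of_continuous hc hf).exists_isGreatest (range_nonempty f)
  exact ⟨t₀, fun t => hub ⟨t, rfl⟩⟩

theorem eq_mul_exp_integral_of_hasDerivAt {f g : ℝ → ℝ} (hg : Continuous g)
    (hf : ∀ t, HasDerivAt f (g t * f t) t) (t₀ t : ℝ) :
    f t = f t₀ * Real.exp (∫ s in t₀..t, g s) := by
  set G : ℝ → ℝ := fun t => ∫ s in t₀..t, g s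
  have hG : ∀ t, HasDerivAt G (g t) t := fun t =>
    intervalIntegral.integral_hasDerivAt_right (hg.intervalIntegrable _ _)
      (hg.stronglyMeasurableAtFilter _ _) hg.continuousAt
  have hW : ∀ t, HasDerivAt (fun t => f t * Real.exp (-G t)) 0 t := fun t => by
    refine ((hf t).mul (hG t).neg.exp).congr_deriv ?_
    simp only [Pi.neg_apply]
    ring
  have hconst := is_const_of_deriv_eq_zero (fun s => (hW s).differentiableAt)
    (fun s => (hW s).deriv) t t₀
  have hG₀ : G t₀ = 0 := intervalIntegral.integral_same
  simp only [hG₀, neg_zero, Real.exp_zero, mul_one] at hconst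
  rw [← hconst, mul_assoc, ← Real.exp_add, neg_add_cancel, Real.exp_zero, mul_one]

theorem exists_apply_gt_of_eventually_deriv_neg_nhdsLT {f f' : ℝ → ℝ} {t₀ : ℝ}
    (hf : ∀ t, HasDerivAt f (f' t) t) (hneg : ∀ᶠ t in 𝓝[<] t₀, f' t < 0) :
    ∃ t, f t₀ < f t := by
  obtain ⟨a, ha : a < t₀, hsub⟩ := mem_nhdsLT_iff_exists_Ioo_subset.mp hneg
  have hanti : StrictAntiOn f (Icc a t₀) := by
    refine strictAntiOn_of_hasDerivWithinAt_neg (convex_Icc a t₀)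
      (fun t _ => (hf t).continuousAt.continuousWithinAt)
      (fun t _ => (hf t).hasDerivWithinAt) fun t ht => ?_
    rw [interior_Icc] at ht
    exact hsub ht
  exact ⟨(a + t₀) / 2, hanti ⟨by linarith, by linarith⟩ ⟨ha.le, le_rfl⟩ (by linarith)⟩

noncomputable def basinFunction (b x y : ℝ) : ℝ := y ^ 2 + x ^ 2 - 2 * b / 3 * x ^ 3

section PlanarSystem

variable {γ b : ℝ} {x y : ℝ → ℝ}

theorem hasDerivAt_basinFunction (hx : ∀ t, HasDerivAt x (-(x t * y t)) t)
    (hy : ∀ t, HasDerivAt y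
      (b * (γ - 1) * x t ^ 3 - (3 * γ - 2) / 2 * x t ^ 2 - 3 * γ / 2 * y t ^ 2) t) (t : ℝ) :
    HasDerivAt (fun t => basinFunction b (x t) (y t))
      (-3 * γ * y t * basinFunction b (x t) (y t)) t := by
  refine ((((hy t).pow 2).add ((hx t).pow 2)).sub
    (((hx t).pow 3).const_mul (2 * b / 3))).congr_deriv ?_
  simp only [basinFunction]
  ring

theorem basinFunction_neg_of_neg (hx : ∀ t, HasDerivAt x (-(x t * y t)) t)
    (hy : ∀ t, HasDerivAt y
      (b * (γ - 1) * x t ^ 3 - (3 * γ - 2) / 2 * x t ^ 2 - 3 * γ / 2 * y t ^ 2) t)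
    {t₀ : ℝ} (h₀ : basinFunction b (x t₀) (y t₀) < 0) (t : ℝ) :
    basinFunction b (x t) (y t) < 0 := by
  have hyc : Continuous y := continuous_iff_continuousAt.mpr fun t => (hy t).continuousAt
  rw [eq_mul_exp_integral_of_hasDerivAt (by fun_prop) (hasDerivAt_basinFunction hx hy) t₀ t]
  exact mul_neg_of_neg_of_pos h₀ (Real.exp_pos _)

theorem eq_zero_and_deriv_nonneg_of_forall_le (hx : ∀ t, HasDerivAt x (-(x t * y t)) t)
    (hxpos : ∀ t, 0 < x t) {t₀ d : ℝ} (hy : HasDerivAt y d t₀) (hmax : ∀ t, x t ≤ x t₀) :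
    y t₀ = 0 ∧ 0 ≤ d := by
  have hy₀ : y t₀ = 0 := by
    simpa [(hxpos t₀).ne'] using
      IsLocalMax.hasDerivAt_eq_zero (Eventually.of_forall hmax) (hx t₀)
  refine ⟨hy₀, not_lt.mp fun hd => ?_⟩
  have hsign := eventually_nhdsWithin_sign_eq_of_deriv_neg (by rwa [hy.deriv]) hy₀
  have hdecr : ∀ᶠ t in 𝓝[<] t₀, -(x t * y t) < 0 := by
    filter_upwards [nhdsWithin_le_nhds hsign, self_mem_nhdsWithin] with t hs (ht : t < t₀)
    rw [sign_pos (sub_pos.mpr ht), sign_eq_one_iff] at hs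
    exact neg_neg_of_pos (mul_pos (hxpos t) hs)
  obtain ⟨t, ht⟩ := exists_apply_gt_of_eventually_deriv_neg_nhdsLT hx hdecr
  exact (hmax t).not_gt ht

theorem basinFunction_neg_of_deriv_nonneg (hγ : 1 < γ) {M : ℝ} (hM : 0 < M)
    (hd : 0 ≤ b * (γ - 1) * M ^ 3 - (3 * γ - 2) / 2 * M ^ 2) :
    basinFunction b M 0 < 0 := by
  unfold basinFunction
  nlinarith [pow_pos hM 2, pow_pos hM 3]

end PlanarSystem

theorem periodic_solution_in_basin_general
    (γ b : ℝ) (hγ : γ ∈ Set.Ioc (1 : ℝ) 2)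
    (x y : ℝ → ℝ)
    (hx : ∀ t, HasDerivAt x (-(x t * y t)) t)
    (hy : ∀ t, HasDerivAt y
      (b * (γ - 1) * x t ^ 3 - (3 * γ - 2) / 2 * x t ^ 2 - 3 * γ / 2 * y t ^ 2) t)
    (hxpos : ∀ t, 0 < x t)
    (T : ℝ) (hT : 0 < T)
    (hper : ∀ t, x (t + T) = x t ∧ y (t + T) = y t) :
    ∀ t, y t ^ 2 + x t ^ 2 - 2 * b / 3 * x t ^ 3 < 0 := by
  have hxc : Continuous x := continuous_iff_continuousAt.mpr fun t => (hx t).continuousAt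
  obtain ⟨t₀, hmax⟩ :=
    Function.Periodic.exists_forall_le_of_continuous (fun t => (hper t).1) hT.ne' hxc
  obtain ⟨hy₀, hd⟩ := eq_zero_and_deriv_nonneg_of_forall_le hx hxpos (hy t₀) hmax
  have h₀ : basinFunction b (x t₀) (y t₀) < 0 := by
    rw [hy₀] at hd ⊢
    exact basinFunction_neg_of_deriv_nonneg hγ.1 (hxpos t₀) (by linarith)
  exact basinFunction_neg_of_neg hx hy h₀

/-- Theorem 2(iii), basin converse: for every `γ ∈ (1, 2]` and every `b > 0`,
every nonconstant periodic solution of the planar system lying in the half-plane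
`x > 0` is entirely contained in `B = {(x,y) : y² + x² - (2b/3)x³ < 0, x > 0}`. -/
theorem periodic_solution_in_basin
    (γ b : ℝ) (hγ : γ ∈ Set.Ioc (1 : ℝ) 2) (hb : 0 < b)
    (x y : ℝ → ℝ)
    (hx : ∀ t, HasDerivAt x (-(x t * y t)) t)
    (hy : ∀ t, HasDerivAt y
      (b * (γ - 1) * x t ^ 3 - (3 * γ - 2) / 2 * x t ^ 2 - 3 * γ / 2 * y t ^ 2) t)
    (hxpos : ∀ t, 0 < x t)
    (hnonconst : ¬ ∃ c : ℝ × ℝ, ∀ t, (x t, y t) = c)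
    (T : ℝ) (hT : 0 < T)
    (hper : ∀ t, x (t + T) = x t ∧ y (t + T) = y t) :
    ∀ t, y t ^ 2 + x t ^ 2 - 2 * b / 3 * x t ^ 3 < 0 :=
  periodic_solution_in_basin_general γ b hγ x y hx hy hxpos T hT hper
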